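/- arXiv:1105.3435 — 3 statements merged into one kernel-verified Lean document; each statement's English description precedes it below -/
import Mathlib

section
/- Every simple polygon has a safe radius: for every simple polygon P with vertices p_1, …, p_n there exists δ > 0 such that for every simple polygon Q with vertices q_1, …, q_n satisfying |p_i − q_i| < δ for all i, every triple of vertices (q_i, q_j, q_k) that is critical in Q is such that the corresponding triple (p_i, p_j, p_k) is critical in P. -/
/-!
A triple that is not critical in `P` stays non-critical for all nearby polygons, and there are
finitely many triples. If the three vertices are not collinear, this is the openness of affine
independence. If they are collinear, the segment between the two outer ones meets the exterior
of `P` in a point `x`, and the corresponding point of the perturbed segment lies in the exterior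
of `Q`: a path from `x` to infinity avoiding the boundary of `P` keeps a positive distance from
it, while the boundary of `Q` stays closer to that of `P` than the vertices are apart.
-/

open Set

noncomputable section

/-- The Euclidean plane. -/
abbrev Plane : Type := EuclideanSpace ℝ (Fin 2)

/-- The `i`-th edge of the polygon with vertices `P 0, …, P (n-1)`:
the closed segment from `P i` to `P (i+1)` (indices mod `n`). -/
def polyEdge {n : ℕ} [NeZero n] (P : Fin n → Plane) (i : Fin n) : Set Plane :=
  segment ℝ (P i) (P (i + 1))

/-- The boundary of the polygon: the union of its edges. -/
def polyBoundary {n : ℕ} [NeZero n] (P : Fin n → Plane) : Set Plane :=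
  ⋃ i, polyEdge P i

/-- A simple polygon on `n ≥ 3` vertices: vertices are pairwise distinct and any
two distinct edges intersect only in common endpoints. -/
def IsSimplePolygon (n : ℕ) [NeZero n] (P : Fin n → Plane) : Prop :=
  3 ≤ n ∧ Function.Injective P ∧
    ∀ i j : Fin n, i ≠ j →
      polyEdge P i ∩ polyEdge P j ⊆
        (({P i, P (i + 1)} : Set Plane) ∩ ({P j, P (j + 1)} : Set Plane))

/-- The interior of the polygon: the union of the bounded connected components of
the complement of the boundary. -/
def polyInterior {n : ℕ} [NeZero n] (P : Fin n → Plane) : Set Plane :=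
  {x | x ∉ polyBoundary P ∧
    Bornology.IsBounded (connectedComponentIn (polyBoundary P)ᶜ x)}

/-- The exterior of the polygon: the unbounded connected component of
the complement of the boundary. -/
def polyExterior {n : ℕ} [NeZero n] (P : Fin n → Plane) : Set Plane :=
  {x | x ∉ polyBoundary P ∧
    ¬ Bornology.IsBounded (connectedComponentIn (polyBoundary P)ᶜ x)}

/-- Vertices `i` and `j` are internally visible: the open segment joining them is
contained in the interior of the polygon. -/
def Visible {n : ℕ} [NeZero n] (P : Fin n → Plane) (i j : Fin n) : Prop :=
  openSegment ℝ (P i) (P j) ⊆ polyInterior P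

/-- Vertex indices `i` and `j` are adjacent: `j ≡ i ± 1 (mod n)`. -/
def AdjacentIdx (n : ℕ) [NeZero n] (i j : Fin n) : Prop :=
  j = i + 1 ∨ i = j + 1

/-- A `k`-tuple of (distinct) vertices is critical if some straight segment contains
all of them and contains no point of the exterior of the polygon. -/
def CriticalTuple {n : ℕ} [NeZero n] (P : Fin n → Plane) {k : ℕ}
    (q : Fin k → Fin n) : Prop :=
  Function.Injective (fun m => P (q m)) ∧
    ∃ u v : Plane, (∀ m, P (q m) ∈ segment ℝ u v) ∧
      segment ℝ u v ∩ polyExterior P = ∅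

/-- A polygon is critical if it has a critical `k`-tuple for some `k ≥ 3`. -/
def IsCriticalPolygon {n : ℕ} [NeZero n] (P : Fin n → Plane) : Prop :=
  ∃ k : ℕ, 3 ≤ k ∧ ∃ q : Fin k → Fin n, CriticalTuple P q

/-- A polygon is convex if the closure of its interior is a convex set. -/
def IsConvexPolygon {n : ℕ} [NeZero n] (P : Fin n → Plane) : Prop :=
  Convex ℝ (closure (polyInterior P))

/-- A transformation of a polygon on the time interval `[a, d]`: each vertex moves
along a continuous orbit, and at each time the points form a simple polygon. -/
def IsTransformation (n : ℕ) [NeZero n] (a d : ℝ) (F : ℝ → Fin n → Plane) : Prop :=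
  a ≤ d ∧ (∀ i : Fin n, ContinuousOn (fun t => F t i) (Icc a d)) ∧
    ∀ t ∈ Icc a d, IsSimplePolygon n (F t)

/-- A transformation on `[a, d]` is visibility-preserving if visible pairs stay
visible as time increases. -/
def VisibilityPreserving (n : ℕ) [NeZero n] (a d : ℝ) (F : ℝ → Fin n → Plane) : Prop :=
  ∀ i j : Fin n, ∀ s t : ℝ, a ≤ s → s ≤ t → t ≤ d →
    Visible (F s) i j → Visible (F t) i j

/-- A transformation on `[a, d]` is a single-vertex move if at most one orbit is
nonconstant. -/
def IsSingleVertexMoveOn (n : ℕ) [NeZero n] (a d : ℝ) (F : ℝ → Fin n → Plane) : Prop :=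
  ∃ i : Fin n, ∀ j : Fin n, j ≠ i → ∀ t ∈ Icc a d, F t j = F a j

/-- `δ > 0` is a safe radius for `P` if every simple polygon `Q` whose vertices are
within distance `δ` of those of `P` has critical triples only at triples that are
already critical in `P`. -/
def SafeRadius {n : ℕ} [NeZero n] (P : Fin n → Plane) (δ : ℝ) : Prop :=
  0 < δ ∧ ∀ Q : Fin n → Plane, IsSimplePolygon n Q →
    (∀ i : Fin n, dist (P i) (Q i) < δ) →
    ∀ q : Fin 3 → Fin n, CriticalTuple Q q → CriticalTuple P q

open Metric Bornology Filter Topology AffineMap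

theorem dist_lineMap_lineMap_le_max {E : Type*} [SeminormedAddCommGroup E] [NormedSpace ℝ E]
    {a a' b b' : E} {t : ℝ} (ht : t ∈ Icc (0 : ℝ) 1) :
    dist (lineMap a b t) (lineMap a' b' t) ≤ max (dist a a') (dist b b') := by
  obtain ⟨ht₀, ht₁⟩ := ht
  simp only [lineMap_apply_module]
  calc dist ((1 - t) • a + t • b) ((1 - t) • a' + t • b')
      ≤ dist ((1 - t) • a) ((1 - t) • a') + dist (t • b) (t • b') :=
        dist_add_add_le _ _ _ _
    _ = (1 - t) * dist a a' + t * dist b b' := by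
      rw [dist_smul₀, dist_smul₀, Real.norm_of_nonneg (by linarith), Real.norm_of_nonneg ht₀]
    _ ≤ (1 - t) * max (dist a a') (dist b b') + t * max (dist a a') (dist b b') := by
      gcongr
      exacts [le_max_left _ _, le_max_right _ _]
    _ = max (dist a a') (dist b b') := by ring

theorem Collinear.exists_forall_mem_segment {E : Type*} [NormedAddCommGroup E]
    [NormedSpace ℝ E] {p : Fin 3 → E} (h : Collinear ℝ {p 0, p 1, p 2}) :
    ∃ i j, ∀ m, p m ∈ segment ℝ (p i) (p j) := by
  rcases h.wbtw_or_wbtw_or_wbtw with h | h | h <;>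
    [refine ⟨0, 2, ?_⟩; refine ⟨1, 0, ?_⟩; refine ⟨2, 1, ?_⟩] <;>
    intro m <;> fin_cases m <;> simp [h.mem_segment, left_mem_segment, right_mem_segment]

theorem eventually_not_collinear {ι E : Type*} [NormedAddCommGroup E] [NormedSpace ℝ E]
    [FiniteDimensional ℝ E] {P : ι → E} {a b c : ι} (h : ¬ Collinear ℝ {P a, P b, P c}) :
    ∀ᶠ Q in 𝓝 P, ¬ Collinear ℝ {Q a, Q b, Q c} := by
  simp only [← affineIndependent_iff_not_collinear_set] at h ⊢
  have hcont : Continuous fun Q : ι → E => ![Q a, Q b, Q c] := by fun_prop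
  exact (isOpen_setOfPred_affineIndependent.preimage hcont).mem_nhds h

theorem not_isBounded_image_smul_Ici {E : Type*} [NormedAddCommGroup E] [NormedSpace ℝ E]
    {y : E} (hy : y ≠ 0) : ¬ IsBounded ((fun s : ℝ => s • y) '' Ici 1) := by
  intro h
  obtain ⟨M, hM⟩ := isBounded_iff_forall_norm_le.1 h
  have hy₀ : 0 < ‖y‖ := norm_pos_iff.2 hy
  have hyM : ‖y‖ ≤ M := by simpa using hM y ⟨1, self_mem_Ici, one_smul ℝ y⟩
  have hs : (1 : ℝ) ≤ M / ‖y‖ + 1 :=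
    le_add_of_nonneg_left (div_nonneg (hy₀.le.trans hyM) hy₀.le)
  have := hM _ ⟨_, hs, rfl⟩
  rw [norm_smul, Real.norm_of_nonneg (by linarith), add_mul, div_mul_cancel₀ _ hy₀.ne'] at this
  linarith

theorem exists_pos_forall_not_isBounded_connectedComponentIn_compl {E : Type*}
    [NormedAddCommGroup E] [NormedSpace ℝ E] {B : Set E} (hBc : IsClosed B) (hBb : IsBounded B)
    {x : E} (hx : x ∉ B) (hxU : ¬ IsBounded (connectedComponentIn Bᶜ x)) :
    ∃ ε > 0, ∀ B' ⊆ thickening ε B, ∀ x' ∈ ball x ε,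
      x' ∉ B' ∧ ¬ IsBounded (connectedComponentIn B'ᶜ x') := by
  obtain ⟨R, hR₀, hR⟩ := hBb.exists_pos_norm_le
  obtain ⟨y, hyC, hy⟩ : ∃ y ∈ connectedComponentIn Bᶜ x, R + 1 < ‖y‖ := by
    by_contra! h
    exact hxU (isBounded_iff_forall_norm_le.2 ⟨R + 1, h⟩)
  have hC : IsPathConnected (connectedComponentIn Bᶜ x) :=
    hBc.isOpen_compl.connectedComponentIn.isConnected_iff_isPathConnected.1
      (isConnected_connectedComponentIn_iff.2 hx)
  obtain ⟨γ, hγ⟩ := hC.joinedIn x (mem_connectedComponentIn hx) y hyC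
  have hγB : Disjoint (range γ) B := disjoint_left.2 fun _ ⟨t, ht⟩ =>
    connectedComponentIn_subset _ _ (ht ▸ hγ t)
  obtain ⟨δ, hδ, hsep⟩ := hγB.exists_thickenings (isCompact_range γ.continuous) hBc
  refine ⟨min δ 1, lt_min hδ one_pos, fun B' hB' x' hx' => ?_⟩
  -- `x'` is joined to infinity outside `B'` through the ball around `x`, the path `γ` and the
  -- ray through `y`.
  have hxγ : x ∈ range γ := ⟨0, γ.source⟩
  set U := (ball x (min δ 1) ∪ range γ) ∪ (fun s : ℝ => s • y) '' Ici 1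
  have hUB' : U ⊆ B'ᶜ := by
    rintro w ((hw | ⟨t, rfl⟩) | ⟨s, hs, rfl⟩) hwB'
    · refine disjoint_left.1 hsep (mem_thickening_iff.2 ⟨x, hxγ, ?_⟩)
        (thickening_mono (min_le_left _ _) _ (hB' hwB'))
      exact (mem_ball.1 hw).trans_le (min_le_left _ _)
    · exact disjoint_left.1 hsep (self_subset_thickening hδ _ ⟨t, rfl⟩)
        (thickening_mono (min_le_left _ _) _ (hB' hwB'))
    · obtain ⟨z, hzB, hwz⟩ :=
        mem_thickening_iff.1 (thickening_mono (min_le_right _ _) _ (hB' hwB'))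
      have hs₁ : (1 : ℝ) ≤ s := hs
      have : ‖y‖ ≤ ‖s • y‖ := by
        rw [norm_smul, Real.norm_of_nonneg (zero_le_one.trans hs₁)]
        exact le_mul_of_one_le_left (norm_nonneg y) hs₁
      have := norm_le_norm_add_norm_sub' (s • y) z
      rw [← dist_eq_norm] at this
      linarith [hR z hzB]
  have hyγ : y ∈ range γ := ⟨1, γ.target⟩
  have hU : IsPreconnected U :=
    ((convex_ball x _).isPreconnected.union x (mem_ball_self (lt_min hδ one_pos)) hxγ
      (isPreconnected_range γ.continuous)).union y (Or.inr hyγ)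
      ⟨1, self_mem_Ici, one_smul ℝ y⟩ (isPreconnected_Ici.image _ (by fun_prop))
  have hy₀ : y ≠ 0 := by rintro rfl; simp at hy; linarith
  have hx'U : x' ∈ U := Or.inl (Or.inl hx')
  exact ⟨hUB' hx'U, fun hb => not_isBounded_image_smul_Ici hy₀
    ((hb.subset (hU.subset_connectedComponentIn hx'U hUB')).subset subset_union_right)⟩

section Polygon

variable {n : ℕ} [NeZero n]

theorem isCompact_polyBoundary (P : Fin n → Plane) : IsCompact (polyBoundary P) :=
  isCompact_iUnion fun i => by
    rw [polyEdge, segment_eq_image_lineMap]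
    exact isCompact_Icc.image (by fun_prop)

theorem polyBoundary_subset_thickening {P Q : Fin n → Plane} {ε : ℝ} (h : dist Q P < ε) :
    polyBoundary Q ⊆ thickening ε (polyBoundary P) := by
  simp only [polyBoundary, polyEdge, segment_eq_image_lineMap, iUnion_subset_iff]
  rintro i _ ⟨t, ht, rfl⟩
  refine mem_thickening_iff.2 ⟨_, mem_iUnion.2 ⟨i, t, ht, rfl⟩, ?_⟩
  exact (dist_lineMap_lineMap_le_max ht).trans_lt
    (max_lt ((dist_le_pi_dist Q P i).trans_lt h) ((dist_le_pi_dist Q P _).trans_lt h))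

theorem isOpen_setOf_mem_polyExterior :
    IsOpen {p : (Fin n → Plane) × Plane | p.2 ∈ polyExterior p.1} := by
  refine Metric.isOpen_iff.2 fun ⟨P, x⟩ ⟨hx, hxU⟩ => ?_
  obtain ⟨ε, hε, hstable⟩ := exists_pos_forall_not_isBounded_connectedComponentIn_compl
    (isCompact_polyBoundary P).isClosed (isCompact_polyBoundary P).isBounded hx hxU
  refine ⟨ε, hε, fun ⟨Q, x'⟩ hQx' => ?_⟩
  rw [mem_ball, Prod.dist_eq, max_lt_iff] at hQx'
  exact hstable _ (polyBoundary_subset_thickening hQx'.1) x' (mem_ball.2 hQx'.2)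

theorem eventually_segment_inter_polyExterior_nonempty {P : Fin n → Plane} {a b : Fin n}
    (h : (segment ℝ (P a) (P b) ∩ polyExterior P).Nonempty) :
    ∀ᶠ Q in 𝓝 P, ∀ u v : Plane, Q a ∈ segment ℝ u v → Q b ∈ segment ℝ u v →
      (segment ℝ u v ∩ polyExterior Q).Nonempty := by
  obtain ⟨_, hx, hxP⟩ := h
  rw [segment_eq_image_lineMap] at hx
  obtain ⟨t, ht, rfl⟩ := hx
  have hcont : Continuous fun Q : Fin n → Plane => (Q, lineMap (Q a) (Q b) t) := by fun_prop
  filter_upwards [(isOpen_setOf_mem_polyExterior.preimage hcont).mem_nhds hxP]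
    with Q hQ u v hau hbv
  refine ⟨_, (convex_segment u v).segment_subset hau hbv ?_, hQ⟩
  rw [segment_eq_image_lineMap]
  exact ⟨t, ht, rfl⟩

theorem eventually_criticalTuple_imp {P : Fin n → Plane} (hP : Function.Injective P)
    (q : Fin 3 → Fin n) : ∀ᶠ Q in 𝓝 P, CriticalTuple Q q → CriticalTuple P q := by
  by_cases hcrit : ∃ u v : Plane, (∀ m, P (q m) ∈ segment ℝ u v) ∧
      segment ℝ u v ∩ polyExterior P = ∅
  · exact Eventually.of_forall fun Q hQ => ⟨hP.comp (Function.Injective.of_comp hQ.1), hcrit⟩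
  by_cases hcol : Collinear ℝ {P (q 0), P (q 1), P (q 2)}
  · obtain ⟨i, j, hij⟩ := hcol.exists_forall_mem_segment (p := fun m => P (q m))
    have hext : (segment ℝ (P (q i)) (P (q j)) ∩ polyExterior P).Nonempty :=
      nonempty_iff_ne_empty.2 fun h => hcrit ⟨_, _, hij, h⟩
    filter_upwards [eventually_segment_inter_polyExterior_nonempty hext]
      with Q hQ ⟨_, u, v, huv, hempty⟩
    exact ((hQ u v (huv i) (huv j)).ne_empty hempty).elim
  · filter_upwards [eventually_not_collinear hcol] with Q hQ ⟨_, u, v, huv, _⟩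
    have hline : ∀ m, Q (q m) ∈ line[ℝ, u, v] := fun m =>
      (mem_segment_iff_wbtw.1 (huv m)).mem_affineSpan
    exact (hQ (collinear_triple_of_mem_affineSpan_pair (hline 0) (hline 1) (hline 2))).elim

end Polygon

/-- Every simple polygon has a safe radius. -/
theorem statement3 {n : ℕ} [NeZero n] (P : Fin n → Plane)
    (hP : IsSimplePolygon n P) :
    ∃ δ : ℝ, SafeRadius P δ := by
  have h : ∀ᶠ Q in 𝓝 P, ∀ q : Fin 3 → Fin n, CriticalTuple Q q → CriticalTuple P q :=
    eventually_all.2 fun q => eventually_criticalTuple_imp hP.2.1 q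
  obtain ⟨δ, hδ, hδP⟩ := Metric.eventually_nhds_iff.1 h
  refine ⟨δ, hδ, fun Q _ hPQ => hδP ((dist_pi_lt_iff hδ).2 fun i => ?_)⟩
  rw [dist_comm]
  exact hPQ i
end
end

section
/- If P is a simple polygon on n vertices in which every pair of nonadjacent vertices is internally visible (equivalently, P has exactly n nonvisible pairs of vertices), then P is convex, i.e., the closure of the interior of P is a convex set. -/
open Set

noncomputable section

/-! Let `K` be the convex hull of the vertices. A point outside `K` is separated from the
boundary by an open half-plane, which is connected and unbounded, so the interior of the polygon
lies in `K`. A point on the frontier of `K` lies on a supporting line, and Carathéodory's theorem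
with positive weights puts it on a segment between two vertices on that line. Such a segment is an
edge: otherwise, by visibility, its relative interior lies in the interior of the polygon, hence
in the interior of `K`. So the frontier of `K` is contained in the boundary, the component of any
point of the interior of `K` off the boundary stays inside `K`, and since the boundary is
Lebesgue-null the closure of the interior of the polygon is `K`. -/

theorem Finset.eq_of_sum_mul_eq_of_le {ι : Type*} {s : Finset ι} {w a : ι → ℝ} {c : ℝ}
    (hw : ∀ i ∈ s, 0 < w i) (hw1 : ∑ i ∈ s, w i = 1) (ha : ∀ i ∈ s, a i ≤ c)
    (h : ∑ i ∈ s, w i * a i = c) : ∀ i ∈ s, a i = c := by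
  have hsum : ∑ i ∈ s, w i * a i = ∑ i ∈ s, w i * c := by rw [← Finset.sum_mul, hw1, one_mul, h]
  intro i hi
  exact mul_left_cancel₀ (hw i hi).ne' <|
    (Finset.sum_eq_sum_iff_of_le fun j hj => mul_le_mul_of_nonneg_left (ha j hj) (hw j hj).le).1
      hsum i hi

section ConvexHull

open Module

variable {E : Type*} [NormedAddCommGroup E] [NormedSpace ℝ E]

theorem not_isBounded_setOf_lt {f : E →L[ℝ] ℝ} (hf : f ≠ 0) (u : ℝ) :
    ¬ Bornology.IsBounded {y | u < f y} := by
  intro hbd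
  obtain ⟨w, hw⟩ := DFunLike.ne_iff.1 hf
  obtain ⟨M, hM⟩ := (f.lipschitz.isBounded_image hbd).bddAbove
  set c := max M u + 1
  have hfc : f ((c / f w) • w) = c := by simp [div_mul_cancel₀ _ hw]
  have : c ≤ M := hM ⟨_, show u < f _ by grind, hfc⟩
  grind

theorem mem_of_isBounded_connectedComponentIn_compl {B K : Set E} (hK : Convex ℝ K)
    (hKc : IsClosed K) (hKne : K.Nonempty) (hBK : B ⊆ K) {x : E}
    (hx : Bornology.IsBounded (connectedComponentIn Bᶜ x)) : x ∈ K := by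
  by_contra hxK
  obtain ⟨f, u, hfK, hux⟩ := geometric_hahn_banach_closed_point hK hKc hxK
  obtain ⟨a, ha⟩ := hKne
  have hf : f ≠ 0 := by
    rintro rfl
    exact lt_irrefl (0 : ℝ) ((hfK a ha).trans hux)
  refine not_isBounded_setOf_lt hf u (hx.subset ?_)
  refine (convex_halfSpace_gt f.toLinearMap.isLinear u).isPreconnected.subset_connectedComponentIn
    hux fun y hy hyB => ?_
  exact (hfK y (hBK hyB)).not_gt hy

theorem exists_ne_zero_forall_le_of_notMem_interior {K : Set E} (hK : Convex ℝ K)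
    (hint : (interior K).Nonempty) {x : E} (hx : x ∉ interior K) :
    ∃ f : E →L[ℝ] ℝ, f ≠ 0 ∧ ∀ y ∈ K, f y ≤ f x := by
  obtain ⟨f, hf⟩ := geometric_hahn_banach_open_point hK.interior isOpen_interior hx
  obtain ⟨y, hy⟩ := hint
  refine ⟨f, fun h0 => (hf y hy).ne (by simp [h0]), fun v hv => ?_⟩
  have hKcl : K ⊆ closure (interior K) := by
    rw [hK.closure_interior_eq_closure_of_nonempty_interior ⟨y, hy⟩]
    exact subset_closure
  exact closure_minimal (fun a ha => (hf a ha).le) (isClosed_le f.continuous continuous_const)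
    (hKcl hv)

variable [FiniteDimensional ℝ E]

theorem AffineIndependent.card_le_finrank_of_vectorSpan_le {ι : Type*} [Fintype ι] {z : ι → E}
    (hz : AffineIndependent ℝ z) {V : Submodule ℝ E} (hzV : vectorSpan ℝ (range z) ≤ V)
    (hV : V ≠ ⊤) : Fintype.card ι ≤ finrank ℝ E := by
  cases isEmpty_or_nonempty ι
  · simp
  rw [← hz.finrank_vectorSpan_add_one]
  have := Submodule.finrank_lt hV
  have := Submodule.finrank_mono hzV
  omega

theorem exists_finset_card_le_finrank_of_mem_convexHull_of_notMem_interior {S : Set E} {x : E}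
    (hxS : x ∈ convexHull ℝ S) (hx : x ∉ interior (convexHull ℝ S)) :
    ∃ t : Finset E, ↑t ⊆ S ∧ t.card ≤ finrank ℝ E ∧ x ∈ convexHull ℝ (t : Set E) := by
  classical
  obtain ⟨ι, _, z, w, hzS, hz, hw, hw1, hwz⟩ := eq_pos_convex_span_of_mem_convexHull hxS
  refine ⟨Finset.univ.image z, by simpa using hzS, Finset.card_image_le.trans ?_, ?_⟩
  · rcases (interior (convexHull ℝ S)).eq_empty_or_nonempty with hint | hint
    · refine hz.card_le_finrank_of_vectorSpan_le (vectorSpan_mono ℝ hzS) fun htop => ?_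
      rw [← AffineSubspace.affineSpan_eq_top_iff_vectorSpan_eq_top_of_nonempty ℝ E E
        (convexHull_nonempty_iff.1 ⟨x, hxS⟩), ← interior_convexHull_nonempty_iff_affineSpan_eq_top,
        hint] at htop
      exact not_nonempty_empty htop
    · obtain ⟨f, hf0, hf⟩ :=
        exists_ne_zero_forall_le_of_notMem_interior (convex_convexHull ℝ S) hint hx
      have hfz : ∀ i, f (z i) = f x := fun i =>
        Finset.eq_of_sum_mul_eq_of_le (fun i _ => hw i) hw1
          (fun i _ => hf _ (subset_convexHull ℝ S (hzS ⟨i, rfl⟩)))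
          (by simp [← hwz, map_sum, smul_eq_mul]) i (Finset.mem_univ i)
      refine hz.card_le_finrank_of_vectorSpan_le (V := LinearMap.ker f.toLinearMap) ?_ ?_
      · rw [vectorSpan_def, Submodule.span_le]
        rintro _ ⟨_, ⟨i, rfl⟩, _, ⟨j, rfl⟩, rfl⟩
        simp [hfz]
      · exact fun htop => hf0 (ContinuousLinearMap.coe_injective (LinearMap.ker_eq_top.1 htop))
  · rw [← hwz]
    exact (convex_convexHull ℝ _).sum_mem (fun i _ => (hw i).le) hw1
      fun i _ => subset_convexHull ℝ _ (by simp)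

theorem exists_mem_segment_of_mem_convexHull_of_notMem_interior (hE : finrank ℝ E = 2)
    {S : Set E} {x : E} (hxS : x ∈ convexHull ℝ S) (hx : x ∉ interior (convexHull ℝ S)) :
    ∃ p ∈ S, ∃ q ∈ S, x ∈ segment ℝ p q := by
  classical
  obtain ⟨t, htS, ht, hxt⟩ :=
    exists_finset_card_le_finrank_of_mem_convexHull_of_notMem_interior hxS hx
  obtain ⟨p, hp⟩ : t.Nonempty := by
    rw [← Finset.coe_nonempty, ← convexHull_nonempty_iff (𝕜 := ℝ)]
    exact ⟨x, hxt⟩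
  by_cases h : ∀ q ∈ t, q = p
  · rw [Finset.eq_singleton_iff_unique_mem.2 ⟨hp, h⟩, Finset.coe_singleton,
      convexHull_singleton] at hxt
    exact ⟨p, htS hp, p, htS hp, by rw [segment_same]; exact hxt⟩
  · obtain ⟨q, hq, hqp⟩ := not_forall₂.1 h
    have htpq : t = {p, q} := (Finset.eq_of_subset_of_card_le
      (Finset.insert_subset hp (Finset.singleton_subset_iff.2 hq))
      (by rw [Finset.card_pair (Ne.symm hqp)]; omega)).symm
    refine ⟨p, htS hp, q, htS hq, ?_⟩
    rwa [htpq, Finset.coe_pair, convexHull_pair] at hxt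

theorem MeasureTheory.Measure.addHaar_segment [MeasurableSpace E] [BorelSpace E]
    (μ : MeasureTheory.Measure E) [μ.IsAddHaarMeasure] (hE : 2 ≤ finrank ℝ E) (p q : E) :
    μ (segment ℝ p q) = 0 := by
  refine MeasureTheory.measure_mono_null ?_ (addHaar_affineSubspace μ (affineSpan ℝ {p, q}) ?_)
  · rw [← convexHull_pair]
    exact convexHull_subset_affineSpan _
  · intro h
    have h1 := (collinear_pair ℝ p q).finrank_le_one
    rw [← direction_affineSpan, h, AffineSubspace.direction_top, finrank_top] at h1
    omega

end ConvexHull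

theorem connectedComponentIn_compl_subset_interior {X : Type*} [TopologicalSpace X]
    {B K : Set X} (hKB : frontier K ⊆ B) {x : X} (hxK : x ∈ interior K) (hxB : x ∉ B) :
    connectedComponentIn Bᶜ x ⊆ interior K := by
  refine isPreconnected_connectedComponentIn.subset_left_of_subset_union isOpen_interior
    isClosed_closure.isOpen_compl
    (disjoint_compl_right.mono_left interior_subset_closure) (fun y hy => ?_)
    ⟨x, mem_connectedComponentIn hxB, hxK⟩
  by_contra h
  simp only [mem_union, mem_compl_iff, not_or, not_not] at h
  exact connectedComponentIn_subset _ _ hy (hKB ⟨h.2, h.1⟩)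

section Polygon

variable {n : ℕ} [NeZero n] (P : Fin n → Plane)

theorem isClosed_polyBoundary : IsClosed (polyBoundary P) :=
  isClosed_iUnion_of_finite fun i => by
    rw [polyEdge, ← convexHull_pair]
    exact ((toFinite _).isCompact_convexHull ℝ).isClosed

theorem isOpen_polyInterior : IsOpen (polyInterior P) := by
  refine isOpen_iff_mem_nhds.2 fun x hx => mem_nhds_iff.2 ⟨connectedComponentIn (polyBoundary P)ᶜ x,
    fun y hy => ⟨connectedComponentIn_subset _ _ hy, ?_⟩,
    (isClosed_polyBoundary P).isOpen_compl.connectedComponentIn, mem_connectedComponentIn hx.1⟩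
  rw [← connectedComponentIn_eq hy]
  exact hx.2

theorem vertex_mem_polyBoundary (i : Fin n) : P i ∈ polyBoundary P :=
  mem_iUnion.2 ⟨i, left_mem_segment ℝ _ _⟩

theorem polyBoundary_subset_convexHull : polyBoundary P ⊆ convexHull ℝ (range P) :=
  iUnion_subset fun i => segment_subset_convexHull (mem_range_self i) (mem_range_self (i + 1))

theorem polyInterior_subset_interior_convexHull :
    polyInterior P ⊆ interior (convexHull ℝ (range P)) :=
  interior_maximal (fun _ hx => mem_of_isBounded_connectedComponentIn_compl
    (convex_convexHull ℝ _) ((finite_range P).isCompact_convexHull ℝ).isClosed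
    ((range_nonempty P).mono (subset_convexHull ℝ _)) (polyBoundary_subset_convexHull P) hx.2)
    (isOpen_polyInterior P)

theorem interior_polyBoundary : interior (polyBoundary P) = ∅ :=
  MeasureTheory.Measure.interior_eq_empty_of_null (μ := MeasureTheory.volume) <|
    MeasureTheory.measure_iUnion_null fun _ => MeasureTheory.Measure.addHaar_segment _
      (finrank_euclideanSpace_fin.ge) _ _

variable {P}

theorem frontier_convexHull_subset_polyBoundary
    (hvis : ∀ i j : Fin n, i ≠ j → ¬ AdjacentIdx n i j → Visible P i j) :
    frontier (convexHull ℝ (range P)) ⊆ polyBoundary P := by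
  intro x hx
  have hxK : x ∈ convexHull ℝ (range P) :=
    ((finite_range P).isCompact_convexHull ℝ).isClosed.frontier_subset hx
  obtain ⟨_, ⟨i, rfl⟩, _, ⟨j, rfl⟩, hxij⟩ :=
    exists_mem_segment_of_mem_convexHull_of_notMem_interior finrank_euclideanSpace_fin hxK hx.2
  by_cases hadj : AdjacentIdx n i j
  · rcases hadj with rfl | rfl
    · exact mem_iUnion.2 ⟨i, hxij⟩
    · exact mem_iUnion.2 ⟨j, by rwa [polyEdge, segment_symm]⟩
  by_cases hi : x = P i
  · exact hi ▸ vertex_mem_polyBoundary P i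
  by_cases hj : x = P j
  · exact hj ▸ vertex_mem_polyBoundary P j
  have hij : i ≠ j := by
    rintro rfl
    rw [segment_same] at hxij
    exact hi hxij
  exact absurd (polyInterior_subset_interior_convexHull P <| hvis i j hij hadj <|
    mem_openSegment_of_ne_left_right (Ne.symm hi) (Ne.symm hj) hxij) hx.2

theorem closure_polyInterior_eq_convexHull
    (hint : (interior (convexHull ℝ (range P))).Nonempty)
    (hfr : frontier (convexHull ℝ (range P)) ⊆ polyBoundary P) :
    closure (polyInterior P) = convexHull ℝ (range P) := by
  set K := convexHull ℝ (range P)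
  have hKc : IsClosed K := ((finite_range P).isCompact_convexHull ℝ).isClosed
  have hdiff : interior K ∩ (polyBoundary P)ᶜ ⊆ polyInterior P := fun x hx =>
    ⟨hx.2, (((finite_range P).isCompact_convexHull ℝ).isBounded.subset
      ((connectedComponentIn_compl_subset_interior hfr hx.1 hx.2).trans interior_subset))⟩
  have hdense : Dense (polyBoundary P)ᶜ :=
    interior_eq_empty_iff_dense_compl.1 (interior_polyBoundary P)
  refine (closure_minimal ((polyInterior_subset_interior_convexHull P).trans interior_subset)
    hKc).antisymm ?_
  calc K ⊆ closure (interior K) := by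
        rw [(convex_convexHull ℝ _).closure_interior_eq_closure_of_nonempty_interior hint]
        exact subset_closure
    _ ⊆ closure (interior K ∩ (polyBoundary P)ᶜ) :=
        closure_minimal (hdense.open_subset_closure_inter isOpen_interior) isClosed_closure
    _ ⊆ closure (polyInterior P) := closure_mono hdiff

end Polygon

theorem statement5_general {n : ℕ} [NeZero n] (P : Fin n → Plane)
    (hvis : ∀ i j : Fin n, i ≠ j → ¬ AdjacentIdx n i j → Visible P i j) :
    IsConvexPolygon P := by
  rcases (interior (convexHull ℝ (range P))).eq_empty_or_nonempty with hint | hint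
  · have : polyInterior P = ∅ :=
      subset_empty_iff.1 (hint ▸ polyInterior_subset_interior_convexHull P)
    rw [IsConvexPolygon, this, closure_empty]
    exact convex_empty
  · rw [IsConvexPolygon, closure_polyInterior_eq_convexHull hint
      (frontier_convexHull_subset_polyBoundary hvis)]
    exact convex_convexHull ℝ _

/-- If every pair of nonadjacent vertices of a simple polygon is
internally visible, then the polygon is convex. -/
theorem statement5 {n : ℕ} [NeZero n] (P : Fin n → Plane)
    (hP : IsSimplePolygon n P)
    (hvis : ∀ i j : Fin n, i ≠ j → ¬ AdjacentIdx n i j → Visible P i j) :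
    IsConvexPolygon P :=
  statement5_general P hvis
end
end

section
/- No critical triple satisfies Property A: if (q_1, q_2, q_3) is a critical triple of a simple polygon P (in particular, q_1, q_2, q_3 are three distinct collinear vertices of P), then it is not the case that every two of q_1, q_2, q_3 are either internally visible in P or adjacent in P. -/
open Set

noncomputable section

/-- No critical triple satisfies Property A: if `(q 0, q 1, q 2)` is a
critical triple of a simple polygon, then it is not the case that every two of its
vertices are either internally visible or adjacent. -/
theorem statement6 {n : ℕ} [NeZero n] (P : Fin n → Plane)
    (hP : IsSimplePolygon n P) (q : Fin 3 → Fin n)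
    (hq : CriticalTuple P q) :
    ¬ (∀ m m' : Fin 3, m ≠ m' →
        Visible P (q m) (q m') ∨ AdjacentIdx n (q m) (q m')) := by
  intro h
  obtain ⟨hinj, u, v, hmem, -⟩ := hq
  -- the three points are collinear
  have hcol : Collinear ℝ ({P (q 0), P (q 1), P (q 2)} : Set Plane) := by
    rw [collinear_iff_exists_forall_eq_smul_vadd]
    refine ⟨u, v - u, ?_⟩
    intro p hp
    have hpseg : p ∈ segment ℝ u v := by
      rcases hp with rfl | rfl | rfl
      · exact hmem 0
      · exact hmem 1
      · exact hmem 2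
    obtain ⟨a, b, ha, hb, hab, rfl⟩ := hpseg
    refine ⟨b, ?_⟩
    have : a = 1 - b := by linarith
    subst this
    simp only [vadd_eq_add, smul_sub]
    module
  -- any vertex lies on the boundary
  have hbd : ∀ m : Fin 3, P (q m) ∈ polyBoundary P := by
    intro m
    exact Set.mem_iUnion.2 ⟨q m, left_mem_segment ℝ _ _⟩
  -- key step: the middle point of the triple yields a contradiction
  have key : ∀ a b c : Fin 3, a ≠ b → b ≠ c → a ≠ c →
      P (q b) ∈ openSegment ℝ (P (q a)) (P (q c)) → False := by
    intro a b c hab hbc hac hmid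
    have hqab : q a ≠ q b := fun e => hab (hinj (show P (q a) = P (q b) by rw [e]))
    have hqbc : q b ≠ q c := fun e => hbc (hinj (show P (q b) = P (q c) by rw [e]))
    have hPab : P (q a) ≠ P (q b) := fun e => hab (hinj e)
    have hPbc : P (q b) ≠ P (q c) := fun e => hbc (hinj e)
    rcases h a c hac with hvis | hadj
    · -- visible: middle point would be in interior, but it is on the boundary
      have := hvis hmid
      exact this.1 (hbd b)
    · -- adjacent: the segment from P (q a) to P (q c) is an edge
      rcases hadj with h1 | h1
      · -- q c = q a + 1
        have hedge : P (q b) ∈ polyEdge P (q a) := by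
          unfold polyEdge
          rw [← h1]
          exact openSegment_subset_segment ℝ _ _ hmid
        have hown : P (q b) ∈ polyEdge P (q b) := left_mem_segment ℝ _ _
        have hsub := hP.2.2 (q a) (q b) hqab ⟨hedge, hown⟩
        rcases hsub.1 with e | e
        · exact hPab e.symm
        · rw [← h1] at e
          exact hPbc e
      · -- q a = q c + 1
        have hedge : P (q b) ∈ polyEdge P (q c) := by
          unfold polyEdge
          rw [← h1, segment_symm]
          exact openSegment_subset_segment ℝ _ _ hmid
        have hown : P (q b) ∈ polyEdge P (q b) := left_mem_segment ℝ _ _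
        have hsub := hP.2.2 (q c) (q b) hqbc.symm ⟨hedge, hown⟩
        rcases hsub.1 with e | e
        · exact hPbc e
        · rw [← h1] at e
          exact hPab e.symm
  have hne : ∀ a b : Fin 3, a ≠ b → P (q a) ≠ P (q b) := fun a b hab e => hab (hinj e)
  rcases hcol.wbtw_or_wbtw_or_wbtw with hw | hw | hw
  · exact key 0 1 2 (by decide) (by decide) (by decide)
      (mem_openSegment_of_ne_left_right (hne 0 1 (by decide)) (hne 2 1 (by decide))
        hw.mem_segment)
  · exact key 1 2 0 (by decide) (by decide) (by decide)
      (mem_openSegment_of_ne_left_right (hne 1 2 (by decide)) (hne 0 2 (by decide))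
        hw.mem_segment)
  · exact key 2 0 1 (by decide) (by decide) (by decide)
      (mem_openSegment_of_ne_left_right (hne 2 0 (by decide)) (hne 1 0 (by decide))
        hw.mem_segment)
end
end
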